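/- Let f be an additive coloring of a dense linear order I by a finite set T. Then there are an interval (a,b) of I, partitions (a,b) = J₁ ∪ … ∪ J_{|T|} = J¹ ∪ … ∪ J^{|T|}, and colors t_k^ℓ ∈ T, such that whenever x < y with x ∈ J_k and y ∈ J^ℓ, we have f(x,y) = t_k^ℓ. -/
import Mathlib

open Set

section Shelah

set_option linter.unusedSectionVars false

variable {I : Type} [LinearOrder I] [DenselyOrdered I]
variable {T : Type} [Finite T]

/-- `D` is dense in the interval `(a,b)`: every subinterval contains a point of `D`. -/
def DenseIn (D : Set I) (a b : I) : Prop :=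
  ∀ u v : I, a ≤ u → v ≤ b → u < v → (D ∩ Set.Ioo u v).Nonempty

/-- colors realized by pairs from `D`. -/
def realT (f : I → I → T) (D : Set I) : Set T :=
  {s | ∃ x ∈ D, ∃ y ∈ D, x < y ∧ f x y = s}

theorem denseIn_mono {D : Set I} {a b a' b' : I} (h : DenseIn D a b)
    (ha : a ≤ a') (hb : b' ≤ b) : DenseIn D a' b' :=
  fun u v hu hv huv => h u v (le_trans ha hu) (le_trans hv hb) huv

theorem denseIn_of_subset {D D' : Set I} {a b : I} (hsub : D ⊆ D') (h : DenseIn D a b) :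
    DenseIn D' a b := fun u v hu hv huv => by
  obtain ⟨y, hy1, hy2⟩ := h u v hu hv huv
  exact ⟨y, hsub hy1, hy2⟩

theorem denseIn_inter_Ioo {D : Set I} {a b c d : I} (h : DenseIn D a b)
    (hc : a ≤ c) (hd : d ≤ b) : DenseIn (D ∩ Set.Ioo c d) c d := by
  intro u v hu hv huv
  obtain ⟨y, hy1, hy2⟩ := h u v (le_trans hc hu) (le_trans hv hd) huv
  exact ⟨y, ⟨hy1, lt_of_le_of_lt hu hy2.1, lt_of_lt_of_le hy2.2 hv⟩, hy2⟩

theorem denseIn_inter_Ioo_self {D : Set I} {c d : I} (h : DenseIn D c d) :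
    DenseIn (D ∩ Set.Ioo c d) c d := by
  intro u v hu hv huv
  obtain ⟨y, hy1, hy2⟩ := h u v hu hv huv
  exact ⟨y, ⟨hy1, lt_of_le_of_lt hu hy2.1, lt_of_lt_of_le hy2.2 hv⟩, hy2⟩

theorem realT_mono (f : I → I → T) {D D' : Set I} (h : D ⊆ D') : realT f D ⊆ realT f D' := by
  rintro s ⟨x, hx, y, hy, hxy, hf⟩
  exact ⟨x, h hx, y, h hy, hxy, hf⟩

theorem mem_realT (f : I → I → T) {D : Set I} {x y : I} (hx : x ∈ D) (hy : y ∈ D)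
    (hxy : x < y) : f x y ∈ realT f D := ⟨x, hx, y, hy, hxy, rfl⟩

/-- Pigeonhole: if `D` is dense in `(a,b)` and colored by finitely many colors,
some fiber is dense in a subinterval. -/
theorem exists_dense_fiber (g : I → T) : ∀ (F : Finset T) (D : Set I) (a b : I), a < b →
    (∀ y ∈ D, g y ∈ F) → DenseIn D a b →
    ∃ v ∈ F, ∃ a' b', a ≤ a' ∧ b' ≤ b ∧ a' < b' ∧ DenseIn {y ∈ D | g y = v} a' b' := by
  classical
  intro F
  induction F using Finset.induction with
  | empty =>
    intro D a b hab hcov hdense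
    obtain ⟨y, hy1, _⟩ := hdense a b le_rfl le_rfl hab
    exact absurd (hcov y hy1) (by simp)
  | @insert v F hvF ih =>
    intro D a b hab hcov hdense
    by_cases hv : DenseIn {y ∈ D | g y = v} a b
    · exact ⟨v, Finset.mem_insert_self v F, a, b, le_rfl, le_rfl, hab, hv⟩
    · rw [DenseIn] at hv
      push_neg at hv
      obtain ⟨u, w, hu, hw, huw, hempty'⟩ := hv
      have hempty := hempty'
      have hD2 : DenseIn {y ∈ D | g y ≠ v} u w := by
        intro u' v' hu' hv' huv'
        obtain ⟨y, hy1, hy2⟩ := hdense u' v' (le_trans hu hu') (le_trans hv' hw) huv'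
        refine ⟨y, ⟨hy1, fun hgy => ?_⟩, hy2⟩
        have : y ∈ {y ∈ D | g y = v} ∩ Set.Ioo u w :=
          ⟨⟨hy1, hgy⟩, lt_of_le_of_lt hu' hy2.1, lt_of_lt_of_le hy2.2 hv'⟩
        rw [hempty] at this
        exact this
      have hcov2 : ∀ y ∈ {y ∈ D | g y ≠ v}, g y ∈ F := by
        rintro y ⟨hy1, hy2⟩
        rcases Finset.mem_insert.mp (hcov y hy1) with h | h
        · exact absurd h hy2
        · exact h
      obtain ⟨v', hv'F, a', b', ha', hb', hab', hdense'⟩ := ih _ u w huw hcov2 hD2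
      refine ⟨v', Finset.mem_insert_of_mem hv'F, a', b', le_trans hu ha', le_trans hb' hw,
        hab', denseIn_of_subset ?_ hdense'⟩
      rintro y ⟨⟨hy1, _⟩, hy3⟩
      exact ⟨hy1, hy3⟩

theorem thmA (f : I → I → T)
    (hadd : ∀ x₁ y₁ z₁ x₂ y₂ z₂ : I,
      x₁ < y₁ → y₁ < z₁ → x₂ < y₂ → y₂ < z₂ →
      f x₁ y₁ = f x₂ y₂ → f y₁ z₁ = f y₂ z₂ → f x₁ z₁ = f x₂ z₂) :
    ∀ (m : ℕ) (D : Set I) (a b : I), a < b → D ⊆ Set.Ioo a b → DenseIn D a b →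
    (realT f D).ncard ≤ m →
    ∃ a' b' : I, ∃ t : T, a ≤ a' ∧ b' ≤ b ∧ a' < b' ∧ ∃ J : Set I, J ⊆ D ∧ J ⊆ Set.Ioo a' b' ∧
      DenseIn J a' b' ∧ ∀ x ∈ J, ∀ y ∈ J, x < y → f x y = t := by
  intro m
  induction m with
  | zero =>
    intro D a b hab _ hdense hcard
    obtain ⟨x, hx, hxI⟩ := hdense a b le_rfl le_rfl hab
    obtain ⟨y, hy, hyI⟩ := hdense x b (le_of_lt hxI.1) le_rfl hxI.2
    have hne : (realT f D).Nonempty := ⟨f x y, mem_realT f hx hy hyI.1⟩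
    have := (Set.ncard_pos (Set.toFinite _)).mpr hne
    omega
  | succ m ih =>
    intro D a b hab hsub hdense hcard
    classical
    set V : Set ℕ := {k | ∃ p : I × I, (a ≤ p.1 ∧ p.2 ≤ b ∧ p.1 < p.2) ∧
      k = (realT f (D ∩ Set.Ioo p.1 p.2)).ncard} with hVdef
    have hVne : V.Nonempty := ⟨_, ⟨(a, b), ⟨le_rfl, le_rfl, hab⟩, rfl⟩⟩
    obtain ⟨⟨a₁, b₁⟩, ⟨haa₁, hb₁b, hab₁⟩, hk⟩ := Nat.sInf_mem hVne
    have hKEY : ∀ c d : I, a₁ ≤ c → d ≤ b₁ → c < d →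
        realT f (D ∩ Set.Ioo c d) = realT f (D ∩ Set.Ioo a₁ b₁) := by
      intro c d hc hd hcd
      have hsub' : realT f (D ∩ Set.Ioo c d) ⊆ realT f (D ∩ Set.Ioo a₁ b₁) :=
        realT_mono f (Set.inter_subset_inter_right D (Set.Ioo_subset_Ioo hc hd))
      have hle : sInf V ≤ (realT f (D ∩ Set.Ioo c d)).ncard :=
        Nat.sInf_le ⟨(c, d), ⟨le_trans haa₁ hc, le_trans hd hb₁b, hcd⟩, rfl⟩
      exact Set.eq_of_subset_of_ncard_le hsub' (hk ▸ hle) (Set.toFinite _)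
    have hS₁card : (realT f (D ∩ Set.Ioo a₁ b₁)).ncard ≤ m + 1 := by
      have h1 : sInf V ≤ (realT f (D ∩ Set.Ioo a b)).ncard :=
        Nat.sInf_le ⟨(a, b), ⟨le_rfl, le_rfl, hab⟩, rfl⟩
      rw [Set.inter_eq_self_of_subset_left hsub] at h1
      exact le_trans (hk ▸ h1) hcard
    have hdense₁ : DenseIn D a₁ b₁ := denseIn_mono hdense haa₁ hb₁b
    -- Step 2 : right analysis
    obtain ⟨w, hwD, hwI⟩ := hdense₁ a₁ b₁ le_rfl le_rfl hab₁
    have hD'dense : DenseIn (D ∩ Set.Ioo w b₁) w b₁ :=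
      denseIn_inter_Ioo hdense (le_trans haa₁ (le_of_lt hwI.1)) hb₁b
    letI : Fintype T := Fintype.ofFinite T
    obtain ⟨v, _, u, w₁, hwu, hw₁b₁, huw₁, hYdense⟩ :=
      exists_dense_fiber (f w) Finset.univ (D ∩ Set.Ioo w b₁) w b₁ hwI.2
        (fun y _ => Finset.mem_univ _) hD'dense
    have ha₁u : a₁ ≤ u := le_trans (le_of_lt hwI.1) hwu
    have key_uw₁ : realT f (D ∩ Set.Ioo u w₁) = realT f (D ∩ Set.Ioo a₁ b₁) :=
      hKEY u w₁ ha₁u hw₁b₁ huw₁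
    have hYsub : {y ∈ D ∩ Set.Ioo w b₁ | f w y = v} ∩ Set.Ioo u w₁ ⊆ D ∩ Set.Ioo u w₁ :=
      fun y hy => ⟨hy.1.1.1, hy.2⟩
    have hS'sub : realT f ({y ∈ D ∩ Set.Ioo w b₁ | f w y = v} ∩ Set.Ioo u w₁) ⊆
        realT f (D ∩ Set.Ioo a₁ b₁) := key_uw₁ ▸ realT_mono f hYsub
    by_cases hcase : (realT f ({y ∈ D ∩ Set.Ioo w b₁ | f w y = v} ∩ Set.Ioo u w₁)).ncard <
        (realT f (D ∩ Set.Ioo a₁ b₁)).ncard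
    · have hle : (realT f ({y ∈ D ∩ Set.Ioo w b₁ | f w y = v} ∩ Set.Ioo u w₁)).ncard ≤ m := by
        have := lt_of_lt_of_le hcase hS₁card
        omega
      obtain ⟨a', b', t, h1, h2, h3, J, hJ1, hJ2, hJ3, hJ4⟩ :=
        ih _ u w₁ huw₁ Set.inter_subset_right (denseIn_inter_Ioo_self hYdense) hle
      exact ⟨a', b', t, le_trans (le_trans haa₁ ha₁u) h1,
        le_trans h2 (le_trans hw₁b₁ hb₁b), h3, J,
        fun j hj => (hJ1 hj).1.1.1, hJ2, hJ3, hJ4⟩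
    · have hS' := Set.eq_of_subset_of_ncard_le hS'sub (not_lt.mp hcase) (Set.toFinite _)
      have C1 : ∀ p q r : I, p < q → q < r → f p q = v →
          f q r ∈ realT f (D ∩ Set.Ioo a₁ b₁) → f p r = v := by
        intro p q r hpq hqr hfpq hfqr
        rw [← hS'] at hfqr
        obtain ⟨y, hy, y', hy', hyy', hfy⟩ := hfqr
        have hwy : w < y := hy.1.1.2.1
        have h1 : f w y = v := hy.1.2
        have h2 : f w y' = v := hy'.1.2
        have h3 := hadd p q r w y y' hpq hqr hwy hyy' (hfpq.trans h1.symm) hfy.symm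
        rw [h3, h2]
      -- Step 3 : left analysis
      obtain ⟨w₀, hw₀D, hw₀I⟩ := hdense u w₁ (le_trans haa₁ ha₁u) (le_trans hw₁b₁ hb₁b) huw₁
      have hw₀b₁ : w₀ < b₁ := lt_of_lt_of_le hw₀I.2 hw₁b₁
      have hD₂dense : DenseIn (D ∩ Set.Ioo u w₀) u w₀ :=
        denseIn_inter_Ioo hdense (le_trans haa₁ ha₁u) (le_trans (le_of_lt hw₀b₁) hb₁b)
      obtain ⟨v', _, u₂, w₂, huu₂, hw₂w₀, hu₂w₂, hXdense⟩ :=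
        exists_dense_fiber (fun x => f x w₀) Finset.univ (D ∩ Set.Ioo u w₀) u w₀ hw₀I.1
          (fun y _ => Finset.mem_univ _) hD₂dense
      have ha₁u₂ : a₁ ≤ u₂ := le_trans ha₁u huu₂
      have hw₂b₁ : w₂ ≤ b₁ := le_trans hw₂w₀ (le_of_lt hw₀b₁)
      have key₂ : realT f (D ∩ Set.Ioo u₂ w₂) = realT f (D ∩ Set.Ioo a₁ b₁) :=
        hKEY u₂ w₂ ha₁u₂ hw₂b₁ hu₂w₂
      have hXsub : {x ∈ D ∩ Set.Ioo u w₀ | (fun x => f x w₀) x = v'} ∩ Set.Ioo u₂ w₂ ⊆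
          D ∩ Set.Ioo u₂ w₂ := fun y hy => ⟨hy.1.1.1, hy.2⟩
      have hS''sub : realT f ({x ∈ D ∩ Set.Ioo u w₀ | (fun x => f x w₀) x = v'} ∩
          Set.Ioo u₂ w₂) ⊆ realT f (D ∩ Set.Ioo a₁ b₁) := key₂ ▸ realT_mono f hXsub
      by_cases hcase₂ : (realT f ({x ∈ D ∩ Set.Ioo u w₀ | (fun x => f x w₀) x = v'} ∩
          Set.Ioo u₂ w₂)).ncard < (realT f (D ∩ Set.Ioo a₁ b₁)).ncard
      · have hle : (realT f ({x ∈ D ∩ Set.Ioo u w₀ | (fun x => f x w₀) x = v'} ∩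
            Set.Ioo u₂ w₂)).ncard ≤ m := by
          have := lt_of_lt_of_le hcase₂ hS₁card
          omega
        obtain ⟨a', b', t, h1, h2, h3, J, hJ1, hJ2, hJ3, hJ4⟩ :=
          ih _ u₂ w₂ hu₂w₂ Set.inter_subset_right (denseIn_inter_Ioo_self hXdense) hle
        exact ⟨a', b', t, le_trans (le_trans haa₁ ha₁u₂) h1,
          le_trans h2 (le_trans hw₂b₁ hb₁b), h3, J,
          fun j hj => (hJ1 hj).1.1.1, hJ2, hJ3, hJ4⟩
      · have hS'' := Set.eq_of_subset_of_ncard_le hS''sub (not_lt.mp hcase₂) (Set.toFinite _)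
        have C2 : ∀ p q r : I, p < q → q < r → f q r = v' →
            f p q ∈ realT f (D ∩ Set.Ioo a₁ b₁) → f p r = v' := by
          intro p q r hpq hqr hfqr hfpq
          rw [← hS''] at hfpq
          obtain ⟨x, hx, x', hx', hxx', hfx⟩ := hfpq
          have hx'w₀ : x' < w₀ := hx'.1.1.2.2
          have h1 : f x w₀ = v' := hx.1.2
          have h2 : f x' w₀ = v' := hx'.1.2
          have h3 := hadd p q r x x' w₀ hpq hqr hxx' hx'w₀ hfx.symm (hfqr.trans h2.symm)
          rw [h3, h1]
        -- Step 4
        have hvS₁ : v ∈ realT f (D ∩ Set.Ioo a₁ b₁) := by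
          obtain ⟨y₀, hy₀Y, _⟩ := hYdense u w₁ le_rfl le_rfl huw₁
          have hy₀v : f w y₀ = v := hy₀Y.2
          have := mem_realT f (D := D ∩ Set.Ioo a₁ b₁) ⟨hwD, hwI⟩
            ⟨hy₀Y.1.1, lt_trans hwI.1 hy₀Y.1.2.1, hy₀Y.1.2.2⟩ hy₀Y.1.2.1
          rwa [hy₀v] at this
        have hv'S₁ : v' ∈ realT f (D ∩ Set.Ioo a₁ b₁) := by
          obtain ⟨x₀, hx₀X, _⟩ := hXdense u₂ w₂ le_rfl le_rfl hu₂w₂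
          have hx₀v : f x₀ w₀ = v' := hx₀X.2
          have := mem_realT f (D := D ∩ Set.Ioo a₁ b₁)
            ⟨hx₀X.1.1, lt_of_le_of_lt ha₁u hx₀X.1.2.1,
              lt_trans hx₀X.1.2.2 hw₀b₁⟩
            ⟨hw₀D, lt_of_le_of_lt ha₁u hw₀I.1, hw₀b₁⟩ hx₀X.1.2.2
          rwa [hx₀v] at this
        -- 4a : v = v'
        obtain ⟨m', hm'1, hm'2⟩ := exists_between hu₂w₂
        have hvp : v ∈ realT f (D ∩ Set.Ioo u₂ m') :=
          (hKEY u₂ m' ha₁u₂ (le_trans (le_of_lt hm'2) hw₂b₁) hm'1).symm ▸ hvS₁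
        obtain ⟨p, hp, q, hq, hpq, hfpq⟩ := hvp
        have hv'p : v' ∈ realT f (D ∩ Set.Ioo m' w₂) :=
          (hKEY m' w₂ (le_trans ha₁u₂ (le_of_lt hm'1)) hw₂b₁ hm'2).symm ▸ hv'S₁
        obtain ⟨x, hx, y₂, hy₂, hxy₂, hfxy₂⟩ := hv'p
        have hpM : p ∈ D ∩ Set.Ioo a₁ b₁ :=
          ⟨hp.1, lt_of_le_of_lt ha₁u₂ hp.2.1, lt_of_lt_of_le (lt_trans hp.2.2 hm'2) hw₂b₁⟩
        have hqM : q ∈ D ∩ Set.Ioo a₁ b₁ :=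
          ⟨hq.1, lt_of_le_of_lt ha₁u₂ hq.2.1, lt_of_lt_of_le (lt_trans hq.2.2 hm'2) hw₂b₁⟩
        have hxM : x ∈ D ∩ Set.Ioo a₁ b₁ :=
          ⟨hx.1, lt_of_le_of_lt ha₁u₂ (lt_trans hm'1 hx.2.1), lt_of_lt_of_le hx.2.2 hw₂b₁⟩
        have hy₂M : y₂ ∈ D ∩ Set.Ioo a₁ b₁ :=
          ⟨hy₂.1, lt_of_le_of_lt ha₁u₂ (lt_trans hm'1 hy₂.2.1), lt_of_lt_of_le hy₂.2.2 hw₂b₁⟩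
        have hqy₂ : q < y₂ := lt_trans hq.2.2 (lt_trans hx.2.1 hxy₂)
        have h1 : f p y₂ = v :=
          C1 p q y₂ hpq hqy₂ hfpq (mem_realT f hqM hy₂M hqy₂)
        have hpx : p < x := lt_trans hp.2.2 hx.2.1
        have h2 : f p y₂ = v' :=
          C2 p x y₂ hpx hxy₂ hfxy₂ (mem_realT f hpM hxM hpx)
        have hvv' : v = v' := h1.symm.trans h2
        -- 4c : conclusion, J := D ∩ Ioo u₂ w₂, constant color v
        refine ⟨u₂, w₂, v, le_trans haa₁ ha₁u₂, le_trans hw₂b₁ hb₁b, hu₂w₂,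
          D ∩ Set.Ioo u₂ w₂, Set.inter_subset_left, Set.inter_subset_right,
          denseIn_inter_Ioo hdense (le_trans haa₁ ha₁u₂) (le_trans hw₂b₁ hb₁b), ?_⟩
        intro p' hp' q' hq' hp'q'
        have hvp' : v ∈ realT f (D ∩ Set.Ioo p' q') :=
          (hKEY p' q' (le_trans ha₁u₂ (le_of_lt hp'.2.1))
            (le_trans (le_of_lt hq'.2.2) hw₂b₁) hp'q').symm ▸ hvS₁
        obtain ⟨p₁, hp₁, q₁, hq₁, hp₁q₁, hfp₁q₁⟩ := hvp'
        have hp'M : p' ∈ D ∩ Set.Ioo a₁ b₁ :=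
          ⟨hp'.1, lt_of_le_of_lt ha₁u₂ hp'.2.1, lt_of_lt_of_le hp'.2.2 hw₂b₁⟩
        have hq'M : q' ∈ D ∩ Set.Ioo a₁ b₁ :=
          ⟨hq'.1, lt_of_le_of_lt ha₁u₂ hq'.2.1, lt_of_lt_of_le hq'.2.2 hw₂b₁⟩
        have hp₁M : p₁ ∈ D ∩ Set.Ioo a₁ b₁ :=
          ⟨hp₁.1, lt_of_le_of_lt ha₁u₂ (lt_trans hp'.2.1 hp₁.2.1),
            lt_of_lt_of_le (lt_trans hp₁.2.2 hq'.2.2) hw₂b₁⟩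
        have hq₁M : q₁ ∈ D ∩ Set.Ioo a₁ b₁ :=
          ⟨hq₁.1, lt_of_le_of_lt ha₁u₂ (lt_trans hp'.2.1 hq₁.2.1),
            lt_of_lt_of_le (lt_trans hq₁.2.2 hq'.2.2) hw₂b₁⟩
        have step1 : f p' q₁ = v' :=
          C2 p' p₁ q₁ hp₁.2.1 hp₁q₁ (hvv' ▸ hfp₁q₁) (mem_realT f hp'M hp₁M hp₁.2.1)
        have step2 : f p' q' = v :=
          C1 p' q₁ q' hq₁.2.1 hq₁.2.2 (hvv'.symm ▸ step1) (mem_realT f hq₁M hq'M hq₁.2.2)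
        exact step2

end Shelah


/-- (Shelah, Conclusion 1.4.) If `f` is an additive coloring of a dense linear order `I`
by a finite set `T`, there are an interval `(a,b)`, partitions
`(a,b) = ⋃ₖ Jₖ = ⋃ˡ Jˡ` and colors `t k l` such that `f x y = t k l` whenever
`x < y` are in `(a,b)` with `x ∈ Jₖ`, `y ∈ Jˡ`. -/
theorem additive_coloring_interval_double_partition
    (I : Type) [LinearOrder I] [DenselyOrdered I] [Nontrivial I]
    (T : Type) [Finite T] (f : I → I → T)
    (hadd : ∀ x₁ y₁ z₁ x₂ y₂ z₂ : I,
      x₁ < y₁ → y₁ < z₁ → x₂ < y₂ → y₂ < z₂ →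
      f x₁ y₁ = f x₂ y₂ → f y₁ z₁ = f y₂ z₂ → f x₁ z₁ = f x₂ z₂) :
    ∃ a b : I, a < b ∧
      ∃ A B : Fin (Nat.card T) → Set I,
        ∃ t : Fin (Nat.card T) → Fin (Nat.card T) → T,
          (⋃ k, A k) = Set.Ioo a b ∧ (⋃ l, B l) = Set.Ioo a b ∧
          (∀ k k', k ≠ k' → A k ∩ A k' = ∅) ∧
          (∀ l l', l ≠ l' → B l ∩ B l' = ∅) ∧
          ∀ x y : I, x ∈ Set.Ioo a b → y ∈ Set.Ioo a b → x < y →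
            ∀ k l, x ∈ A k → y ∈ B l → f x y = t k l := by
  classical
  obtain ⟨a₀, b₀, hab₀⟩ : ∃ a b : I, a < b := by
    obtain ⟨x, y, hxy⟩ := exists_pair_ne I
    rcases hxy.lt_or_gt with h | h
    · exact ⟨x, y, h⟩
    · exact ⟨y, x, h⟩
  have hDdense : DenseIn (Set.Ioo a₀ b₀ : Set I) a₀ b₀ := by
    intro u v hu hv huv
    obtain ⟨z, hz⟩ := exists_between huv
    exact ⟨z, ⟨lt_of_le_of_lt hu hz.1, lt_of_lt_of_le hz.2 hv⟩, hz⟩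
  have hcard : (realT f (Set.Ioo a₀ b₀)).ncard ≤ Nat.card T := by
    calc (realT f (Set.Ioo a₀ b₀)).ncard ≤ (Set.univ : Set T).ncard :=
          Set.ncard_le_ncard (Set.subset_univ _) (Set.toFinite _)
      _ = Nat.card T := Set.ncard_univ T
  obtain ⟨a, b, t₀, _, _, hab, J, hJD, hJI, hJdense, hJpair⟩ :=
    thmA f hadd (Nat.card T) (Set.Ioo a₀ b₀) a₀ b₀ hab₀ subset_rfl hDdense hcard
  have e : T ≃ Fin (Nat.card T) := Finite.equivFin T
  -- well-definedness of the "right color" of x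
  have wdR : ∀ x j j' : I, a < x → j ∈ J → j' ∈ J → x < j → x < j' → f x j = f x j' := by
    have main : ∀ x j j' : I, a < x → j ∈ J → j' ∈ J → x < j → x < j' → j < j' →
        f x j = f x j' := by
      intro x j j' hax hj hj' hxj hxj' hjj'
      obtain ⟨j₀, hj₀J, hj₀I⟩ := hJdense x j (le_of_lt hax) (le_of_lt (hJI hj).2) hxj
      have h1 : f j₀ j = t₀ := hJpair j₀ hj₀J j hj hj₀I.2
      have h2 : f j₀ j' = t₀ := hJpair j₀ hj₀J j' hj' (lt_trans hj₀I.2 hjj')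
      exact hadd x j₀ j x j₀ j' hj₀I.1 hj₀I.2 hj₀I.1 (lt_trans hj₀I.2 hjj') rfl
        (h1.trans h2.symm)
    intro x j j' hax hj hj' hxj hxj'
    rcases lt_trichotomy j j' with h | h | h
    · exact main x j j' hax hj hj' hxj hxj' h
    · rw [h]
    · exact (main x j' j hax hj' hj hxj' hxj h).symm
  have wdL : ∀ y j j' : I, y < b → j ∈ J → j' ∈ J → j < y → j' < y → f j y = f j' y := by
    have main : ∀ y j j' : I, y < b → j ∈ J → j' ∈ J → j < y → j' < y → j < j' →
        f j y = f j' y := by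
      intro y j j' hyb hj hj' hjy hj'y hjj'
      obtain ⟨j₀, hj₀J, hj₀I⟩ := hJdense j' y (le_of_lt (hJI hj').1) (le_of_lt hyb) hj'y
      have h1 : f j j₀ = t₀ := hJpair j hj j₀ hj₀J (lt_trans hjj' hj₀I.1)
      have h2 : f j' j₀ = t₀ := hJpair j' hj' j₀ hj₀J hj₀I.1
      exact hadd j j₀ y j' j₀ y (lt_trans hjj' hj₀I.1) hj₀I.2 hj₀I.1 hj₀I.2
        (h1.trans h2.symm) rfl
    intro y j j' hyb hj hj' hjy hj'y
    rcases lt_trichotomy j j' with h | h | h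
    · exact main y j j' hyb hj hj' hjy hj'y h
    · rw [h]
    · exact (main y j' j hyb hj' hj hj'y hjy h).symm
  set R : I → T := fun x =>
    if h : (J ∩ Set.Ioo x b).Nonempty then f x h.some else t₀ with hRdef
  set L : I → T := fun y =>
    if h : (J ∩ Set.Ioo a y).Nonempty then f h.some y else t₀ with hLdef
  have hR : ∀ x j : I, a < x → j ∈ J → x < j → j < b → R x = f x j := by
    intro x j hax hj hxj hjb
    have hne : (J ∩ Set.Ioo x b).Nonempty := ⟨j, hj, hxj, hjb⟩
    rw [hRdef]
    dsimp only
    rw [dif_pos hne]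
    exact wdR x hne.some j hax hne.some_mem.1 hj hne.some_mem.2.1 hxj
  have hL : ∀ y j : I, a < j → j ∈ J → j < y → y < b → L y = f j y := by
    intro y j haj hj hjy hyb
    have hne : (J ∩ Set.Ioo a y).Nonempty := ⟨j, hj, haj, hjy⟩
    rw [hLdef]
    dsimp only
    rw [dif_pos hne]
    exact wdL y hne.some j hyb hne.some_mem.1 hj hne.some_mem.2.2 hjy
  have cross : ∀ x y x' y' : I, x ∈ Set.Ioo a b → y ∈ Set.Ioo a b → x' ∈ Set.Ioo a b →
      y' ∈ Set.Ioo a b → x < y → x' < y' → R x = R x' → L y = L y' → f x y = f x' y' := by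
    intro x y x' y' hx hy hx' hy' hxy hx'y' hRR hLL
    obtain ⟨j, hjJ, hjI⟩ := hJdense x y (le_of_lt hx.1) (le_of_lt hy.2) hxy
    obtain ⟨j', hj'J, hj'I⟩ := hJdense x' y' (le_of_lt hx'.1) (le_of_lt hy'.2) hx'y'
    have e1 : R x = f x j := hR x j hx.1 hjJ hjI.1 (lt_trans hjI.2 hy.2)
    have e2 : R x' = f x' j' := hR x' j' hx'.1 hj'J hj'I.1 (lt_trans hj'I.2 hy'.2)
    have e3 : L y = f j y := hL y j (lt_trans hx.1 hjI.1) hjJ hjI.2 hy.2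
    have e4 : L y' = f j' y' := hL y' j' (lt_trans hx'.1 hj'I.1) hj'J hj'I.2 hy'.2
    exact hadd x j y x' j' y' hjI.1 hjI.2 hj'I.1 hj'I.2
      ((e1.symm.trans hRR).trans e2) ((e3.symm.trans hLL).trans e4)
  refine ⟨a, b, hab, fun k => {x | x ∈ Set.Ioo a b ∧ e (R x) = k},
    fun l => {y | y ∈ Set.Ioo a b ∧ e (L y) = l},
    fun k l => if h : ∃ p : I × I, (p.1 ∈ Set.Ioo a b ∧ e (R p.1) = k) ∧
        (p.2 ∈ Set.Ioo a b ∧ e (L p.2) = l) ∧ p.1 < p.2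
      then f h.choose.1 h.choose.2 else t₀, ?_, ?_, ?_, ?_, ?_⟩
  · ext x
    simp only [Set.mem_iUnion, Set.mem_setOf_eq]
    exact ⟨fun ⟨k, hk, _⟩ => hk, fun hx => ⟨e (R x), hx, rfl⟩⟩
  · ext y
    simp only [Set.mem_iUnion, Set.mem_setOf_eq]
    exact ⟨fun ⟨l, hl, _⟩ => hl, fun hy => ⟨e (L y), hy, rfl⟩⟩
  · intro k k' hkk'
    ext x
    simp only [Set.mem_inter_iff, Set.mem_setOf_eq, Set.mem_empty_iff_false, iff_false]
    rintro ⟨⟨_, h1⟩, _, h2⟩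
    exact hkk' (h1.symm.trans h2)
  · intro l l' hll'
    ext y
    simp only [Set.mem_inter_iff, Set.mem_setOf_eq, Set.mem_empty_iff_false, iff_false]
    rintro ⟨⟨_, h1⟩, _, h2⟩
    exact hll' (h1.symm.trans h2)
  · intro x y hx hy hxy k l hxk hyl
    have hex : ∃ p : I × I, (p.1 ∈ Set.Ioo a b ∧ e (R p.1) = k) ∧
        (p.2 ∈ Set.Ioo a b ∧ e (L p.2) = l) ∧ p.1 < p.2 := ⟨(x, y), hxk, hyl, hxy⟩
    dsimp only
    rw [dif_pos hex]
    obtain ⟨h1, h2, h3⟩ := hex.choose_spec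
    exact cross x y hex.choose.1 hex.choose.2 hx hy h1.1 h2.1 hxy h3
      (e.injective (hxk.2.trans h1.2.symm)) (e.injective (hyl.2.trans h2.2.symm))
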